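/- Let F₂ be the free group on x and y. Define γ₂ = x(xy³)x y⁻¹x⁻¹, γ₃ = (xy)x²y³xy⁻¹x⁻¹(y⁻¹x⁻¹), and γₛ = (xy)^{s-2} x² y³ x (y⁻¹x⁻¹)^{s-1} for s ≥ 4. Then for any n ≥ 2 the elements γ₂, ..., γₙ generate a free subgroup of F₂ of rank n−1, with the γₛ as a free basis. -/

import Mathlib

/-!
Write `c = xy` and `d = x²y³x c⁻¹`; then `γ_{k+2} = cᵏ d c⁻ᵏ`. Send `F₂` to
`FreeGroup ℤ ⋊ ℤ`, where the generator `t` of `ℤ` shifts the free generators `aⱼ ↦ aⱼ₊₁`,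
by `x ↦ a₀`, `y ↦ a₀⁻¹t`. Then `c ↦ t` and `γ_{k+2} ↦ Qₖ t²` with
`Qₖ = aₖ aₖ₊₁⁻¹ aₖ₊₂⁻¹ aₖ₊₃`. Pushing all powers of `t` to the right, a reduced word in the
`Qₖ t²` becomes a product of shifted copies of the `Qₖ^{±1}`, and adjacent copies never cancel
against each other unless they come from a generator followed by its own inverse. So a nontrivial
reduced word has a nonempty reduced image and the `Qₖ t²` are a free basis.
-/

namespace Stmt4

abbrev F2 := FreeGroup (Fin 2)

def x : F2 := FreeGroup.of 0
def y : F2 := FreeGroup.of 1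

def γ (s : ℕ) : F2 :=
  if s = 2 then x * (x * y ^ 3) * x * y⁻¹ * x⁻¹
  else if s = 3 then (x * y) * x ^ 2 * y ^ 3 * x * y⁻¹ * x⁻¹ * (y⁻¹ * x⁻¹)
  else (x * y) ^ (s - 2) * x ^ 2 * y ^ 3 * x * (y⁻¹ * x⁻¹) ^ (s - 1)

open FreeGroup hiding map_one map_mul map_inv
open SemidirectProduct

def shift : Multiplicative ℤ →* MulAut (FreeGroup ℤ) where
  toFun e := freeGroupCongr (Equiv.addRight e.toAdd)
  map_one' := MulEquiv.toMonoidHom_injective <| ext_hom _ _ fun j => by simp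
  map_mul' e f := MulEquiv.toMonoidHom_injective <| ext_hom _ _ fun j => by
    simp [← add_assoc, add_right_comm]

lemma shift_of (e j : ℤ) : shift (.ofAdd e) (of j) = of (j + e) := by
  simp [shift]

def shiftWord (e : ℤ) (L : List (ℤ × Bool)) : List (ℤ × Bool) := L.map fun p => (p.1 + e, p.2)

lemma shift_mk (e : ℤ) (L : List (ℤ × Bool)) : shift (.ofAdd e) (mk L) = mk (shiftWord e L) := by
  simp [shift, shiftWord]

abbrev W := FreeGroup ℤ ⋊[shift] Multiplicative ℤ

lemma inr_mul_inl (e : ℤ) (z : FreeGroup ℤ) :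
    (inr (.ofAdd e) * inl z : W) = inl (shift (.ofAdd e) z) * inr (.ofAdd e) := by
  rw [inl_aut, map_inv, inv_mul_cancel_right]

def qWord (s : ℤ) : List (ℤ × Bool) := [(s, true), (s + 1, false), (s + 2, false), (s + 3, true)]

def gen (s : ℤ) : W := inl (mk (qWord s)) * inr (.ofAdd 2)

def twist : Bool → ℤ
  | true => 2
  | false => -2

/-- The `FreeGroup ℤ`-part of the letter `p` of a word in the `gen s`, when the letters before it
contribute `inr (ofAdd e)` to the `Multiplicative ℤ` factor. -/
def letterWord : ℤ → ℤ × Bool → List (ℤ × Bool)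
  | e, (s, true) => shiftWord e (qWord s)
  | e, (s, false) => shiftWord (e - 2) (invRev (qWord s))

def imageWord : ℤ → List (ℤ × Bool) → List (ℤ × Bool)
  | _, [] => []
  | e, p :: r => letterWord e p ++ imageWord (e + twist p.2) r

lemma inr_mul_lift_gen_mk_singleton (e : ℤ) (p : ℤ × Bool) :
    inr (.ofAdd e) * lift gen (mk [p]) =
      inl (mk (letterWord e p)) * inr (.ofAdd (e + twist p.2)) := by
  obtain ⟨s, _ | _⟩ := p
  · have hinv : (gen s)⁻¹ = inr (.ofAdd (-2)) * inl (mk (invRev (qWord s))) := by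
      rw [gen, mul_inv_rev, ← map_inv (inl : FreeGroup ℤ →* W),
        ← map_inv (inr : Multiplicative ℤ →* W), inv_mk]
      rfl
    rw [show (mk [(s, false)] : FreeGroup ℤ) = (of s)⁻¹ from rfl, map_inv, lift_apply_of,
      hinv, ← mul_assoc, ← map_mul, ← ofAdd_add, inr_mul_inl, shift_mk]
    rfl
  · rw [show (mk [(s, true)] : FreeGroup ℤ) = of s from rfl, lift_apply_of, gen, ← mul_assoc,
      inr_mul_inl, shift_mk, mul_assoc, ← map_mul, ← ofAdd_add]
    rfl

lemma inr_mul_lift_gen_mk (ℓ : List (ℤ × Bool)) (e : ℤ) :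
    ∃ m, inr (.ofAdd e) * lift gen (mk ℓ) = inl (mk (imageWord e ℓ)) * inr m := by
  induction ℓ generalizing e with
  | nil => exact ⟨.ofAdd e, by simp [imageWord, ← one_eq_mk]⟩
  | cons p r ih =>
    obtain ⟨m, hm⟩ := ih (e + twist p.2)
    refine ⟨m, ?_⟩
    rw [← List.singleton_append, ← mul_mk, map_mul, ← mul_assoc,
      inr_mul_lift_gen_mk_singleton, mul_assoc, hm, ← mul_assoc, ← map_mul, mul_mk]
    rfl

lemma letterWord_ne_nil (e : ℤ) (p : ℤ × Bool) : letterWord e p ≠ [] := by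
  obtain ⟨s, _ | _⟩ := p <;> simp [letterWord, shiftWord, qWord, invRev]

/-- Adjacent blocks meet either in two letters of equal sign or, for letters `(s, b)`, `(s', !b)`,
in `(s + m, b')` followed by `(s' + m, !b')`; so they cancel only when `s = s'`. -/
lemma isReduced_letterWord_append {p q : ℤ × Bool} (h : p.1 = q.1 → p.2 = q.2) (e : ℤ) :
    FreeGroup.IsReduced (letterWord e p ++ letterWord (e + twist p.2) q) := by
  obtain ⟨s, _ | _⟩ := p <;> obtain ⟨s', _ | _⟩ := q <;>
    simp [letterWord, shiftWord, qWord, invRev, twist, FreeGroup.IsReduced] at h ⊢ <;> omega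

lemma isReduced_letterWord (e : ℤ) (p : ℤ × Bool) : FreeGroup.IsReduced (letterWord e p) :=
  (isReduced_letterWord_append (q := p) (fun _ => rfl) e).infix (List.prefix_append _ _).isInfix

lemma imageWord_eq_nil {e : ℤ} {ℓ : List (ℤ × Bool)} : imageWord e ℓ = [] ↔ ℓ = [] := by
  cases ℓ <;> simp [imageWord, letterWord_ne_nil]

lemma isReduced_imageWord {ℓ : List (ℤ × Bool)} (h : FreeGroup.IsReduced ℓ) (e : ℤ) :
    FreeGroup.IsReduced (imageWord e ℓ) := by
  induction ℓ generalizing e with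
  | nil => exact .nil
  | cons p r ih =>
    rcases r with _ | ⟨q, r⟩
    · simpa [imageWord] using isReduced_letterWord e p
    · rw [imageWord, imageWord, ← List.append_assoc]
      exact .append_overlap (isReduced_letterWord_append (isReduced_cons_cons.1 h).1 e)
        (ih h.tail _) (letterWord_ne_nil _ q)

theorem lift_gen_injective : Function.Injective (lift gen) := by
  rw [injective_iff_map_eq_one]
  intro w hw
  obtain ⟨m, hm⟩ := inr_mul_lift_gen_mk w.toWord 0
  rw [mk_toWord, hw, mul_one, ofAdd_zero, map_one] at hm
  have himage : mk (imageWord 0 w.toWord) = 1 := by simpa using congrArg left hm.symm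
  have hword := congrArg toWord himage
  rwa [toWord_mk, (isReduced_imageWord isReduced_toWord 0).reduce_eq, toWord_one,
    imageWord_eq_nil, toWord_eq_nil_iff] at hword

lemma γ_add_two_eq_conj (k : ℕ) :
    γ (k + 2) = (x * y) ^ k * (x ^ 2 * y ^ 3 * x * (x * y)⁻¹) * ((x * y) ^ k)⁻¹ := by
  rcases k with _ | _ | k
  · rw [γ, if_pos rfl, pow_two]
    group
  · rw [γ, if_neg (by omega), if_pos rfl, pow_two]
    group
  · rw [γ, if_neg (by omega), if_neg (by omega), ← mul_inv_rev, inv_pow,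
      show k + 1 + 1 + 2 - 1 = k + 1 + 1 + 1 by omega, pow_succ _ (k + 1 + 1)]
    simp only [Nat.add_sub_cancel]
    generalize x * y = c
    group

def a : W := inl (of 0)

def t : W := inr (.ofAdd 1)

lemma inr_ofAdd (e : ℤ) : (inr (.ofAdd e) : W) = t ^ e := by
  rw [t, ← map_zpow, ← ofAdd_zsmul, smul_eq_mul, mul_one]

lemma inl_of (j : ℤ) : (inl (of j) : W) = t ^ j * a * t ^ (-j) := by
  have := inl_aut (φ := shift) (.ofAdd j) (of 0)
  rw [← ofAdd_neg, inr_ofAdd, inr_ofAdd, shift_of, zero_add] at this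
  exact this

def ψ : F2 →* W := lift ![a, a⁻¹ * t]

lemma ψ_x : ψ x = a := lift_apply_of

lemma ψ_y : ψ y = a⁻¹ * t := lift_apply_of

lemma ψ_γ (k : ℕ) : ψ (γ (k + 2)) = gen k := by
  have hq : mk (qWord k) = of (k : ℤ) * (of ((k : ℤ) + 1))⁻¹ * (of ((k : ℤ) + 2))⁻¹ *
      of ((k : ℤ) + 3) := rfl
  simp only [γ_add_two_eq_conj, map_mul, map_inv, map_pow, ψ_x, ψ_y, gen, hq, inl_of, inr_ofAdd,
    pow_succ, pow_zero, one_mul]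
  group

theorem stmt_4_general (n : ℕ) :
    Function.Injective (FreeGroup.lift fun i : Fin (n - 1) => γ ((i : ℕ) + 2)) := by
  have hcomp : ψ.comp (FreeGroup.lift fun i : Fin (n - 1) => γ ((i : ℕ) + 2)) =
      (lift gen).comp (map fun i : Fin (n - 1) => ((i : ℕ) : ℤ)) :=
    ext_hom _ _ fun i => by simp [ψ_γ]
  refine Function.Injective.of_comp (f := ψ) ?_
  rw [← MonoidHom.coe_comp, hcomp, MonoidHom.coe_comp]
  exact lift_gen_injective.comp (map_injective fun i j h => Fin.ext (by exact_mod_cast h))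

theorem stmt_4 (n : ℕ) (hn : 2 ≤ n) :
    Function.Injective (FreeGroup.lift fun i : Fin (n - 1) => γ ((i : ℕ) + 2)) :=
  stmt_4_general n

end Stmt4
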